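/- In the subcubization step: let \(v\) be a vertex of degree \(d \geq 4\), replaced by vertices \(u, v', w\) with new edges \(uv'\), \(v'w\), where edges of \(L\) attach to \(u\) and edges of \(R\) attach to \(w\), with \(|L|, |R| \geq 2\) and \(L \sqcup R = \delta(v)\). Then the supercubicity \(s(G) = \sum_{x \in V(G) - T} \max\{0, \deg x - 3\}\) decreases by exactly 1: \(s(G') = s(G) - 1\). -/
import Mathlib


open scoped Classical

/-- Subcubization decreases supercubicity by exactly one.  A non-terminal vertex `v`
of degree `d ≥ 4` is replaced by `u, v', w` (the three elements of `Fin 3`, all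
non-terminal) with `deg u = 1 + |L|`, `deg v' = 2`, `deg w = 1 + |R|`, where
`δ(v) = L ⊔ R`, `|L|, |R| ≥ 2`; all other degrees are unchanged. -/
theorem stmt13 {V : Type*} [Fintype V] (T : Set V) (deg : V → ℕ)
    (v : V) (hvT : v ∉ T) (d : ℕ) (hd : 4 ≤ d) (hdeg : deg v = d)
    (l r : ℕ) (hl : 2 ≤ l) (hr : 2 ≤ r) (hlr : l + r = d)
    (deg' : ({x : V // x ≠ v} ⊕ Fin 3) → ℕ)
    (hold : ∀ x : {x : V // x ≠ v}, deg' (Sum.inl x) = deg x.1)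
    (hu : deg' (Sum.inr 0) = 1 + l)
    (hv' : deg' (Sum.inr 1) = 2)
    (hw : deg' (Sum.inr 2) = 1 + r)
    (T' : Set ({x : V // x ≠ v} ⊕ Fin 3))
    (hT' : T' = Sum.inl '' {x : {x : V // x ≠ v} | x.1 ∈ T}) :
    ∑ z ∈ Finset.univ.filter (fun z => z ∉ T'), (deg' z - 3)
      = (∑ x ∈ Finset.univ.filter (fun x => x ∉ T), (deg x - 3)) - 1 ∧
    1 ≤ ∑ x ∈ Finset.univ.filter (fun x => x ∉ T), (deg x - 3) := by
  have hsplit : (∑ x ∈ Finset.univ.filter (fun x => x ∉ T), (deg x - 3))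
      = (∑ x : {x : V // x ≠ v}, if x.1 ∉ T then deg x.1 - 3 else 0) + (d - 3) := by
    rw [Finset.sum_filter]
    rw [← Finset.sum_erase_add Finset.univ _ (Finset.mem_univ v)]
    congr 1
    · rw [Finset.sum_subtype (p := fun x => x ≠ v) (Finset.univ.erase v) (by simp)
        (fun x => if x ∉ T then deg x - 3 else 0)]
    · simp [hvT, hdeg]
  have hnew : (∑ z ∈ Finset.univ.filter (fun z => z ∉ T'), (deg' z - 3))
      = (∑ x : {x : V // x ≠ v}, if x.1 ∉ T then deg x.1 - 3 else 0) + (d - 4) := by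
    rw [Finset.sum_filter, Fintype.sum_sum_type]
    have h1 : (∑ x : {x : V // x ≠ v}, if Sum.inl x ∉ T' then deg' (Sum.inl x) - 3 else 0)
        = ∑ x : {x : V // x ≠ v}, if x.1 ∉ T then deg x.1 - 3 else 0 := by
      apply Finset.sum_congr rfl
      intro x _
      have hiff : (Sum.inl x ∉ T') ↔ x.1 ∉ T := by
        subst hT'; simp
      rw [hold]
      by_cases hx : x.1 ∉ T <;> simp [hx, hiff]
    have hnot : ∀ i : Fin 3, (Sum.inr i : {x : V // x ≠ v} ⊕ Fin 3) ∉ T' := by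
      subst hT'; simp
    have h2 : (∑ i : Fin 3, if Sum.inr i ∉ T' then deg' (Sum.inr i) - 3 else 0) = d - 4 := by
      rw [Fin.sum_univ_three, if_pos (hnot 0), if_pos (hnot 1), if_pos (hnot 2),
        hu, hv', hw]
      omega
    rw [h1, h2]
  constructor
  · rw [hnew, hsplit]; omega
  · rw [hsplit]; omega
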